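/- arXiv:math/0404481 — 2 statements merged into one kernel-verified Lean document; each statement's English description precedes it below -/
import Mathlib

section
/- In the cone over the 1-skeleton of a regular tetrahedron inscribed in the unit sphere (the tetrahedral cone), the six planar triangular sheets meet in threes at equal angles of 2π/3 along each of the four rays to the vertices. -/
/-! Removing from unit vectors `x`, `y` their components along a unit vector `u`, where all three
pairwise inner products equal `c`, leaves vectors with inner product `c - c²` and squared norms
`1 - c²`, hence at angle `arccos (c / (1 + c))`. The vertices of the regular tetrahedron have
`c = -1/3`, which gives `arccos (-1/2) = 2π/3`. -/

open Real InnerProductGeometry RealInnerProductSpace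

theorem Real.arccos_neg_one_half : arccos (-(1 / 2)) = 2 * π / 3 := by
  rw [← cos_pi_div_three, arccos_neg, arccos_cos (by positivity) (by linarith [pi_pos])]
  ring

section Projection

variable {E : Type*} [NormedAddCommGroup E] [InnerProductSpace ℝ E] {u x y : E}

theorem inner_sub_inner_smul_of_norm_eq_one (hu : ‖u‖ = 1) :
    ⟪x - ⟪x, u⟫ • u, y - ⟪y, u⟫ • u⟫ = ⟪x, y⟫ - ⟪x, u⟫ * ⟪y, u⟫ := by
  have huu : ⟪u, u⟫ = 1 := by rw [real_inner_self_eq_norm_sq, hu, one_pow]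
  simp only [inner_sub_left, inner_sub_right, real_inner_smul_left, real_inner_smul_right, huu,
    real_inner_comm u]
  ring

theorem angle_sub_inner_smul_of_equiangular {c : ℝ} (hu : ‖u‖ = 1) (hx : ‖x‖ = 1) (hy : ‖y‖ = 1)
    (hxy : ⟪x, y⟫ = c) (hxu : ⟪x, u⟫ = c) (hyu : ⟪y, u⟫ = c) (hc : c ≠ 1) :
    angle (x - ⟪x, u⟫ • u) (y - ⟪y, u⟫ • u) = arccos (c / (1 + c)) := by
  have hsq : ∀ z : E, ‖z‖ = 1 → ⟪z, u⟫ = c → ‖z - ⟪z, u⟫ • u‖ ^ 2 = 1 - c ^ 2 := fun z hz hzu => by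
    rw [← real_inner_self_eq_norm_sq, inner_sub_inner_smul_of_norm_eq_one hu,
      real_inner_self_eq_norm_sq, hz, hzu]
    ring
  have hnorm : ‖x - ⟪x, u⟫ • u‖ = ‖y - ⟪y, u⟫ • u‖ := by
    rw [← sq_eq_sq₀ (norm_nonneg _) (norm_nonneg _), hsq x hx hxu, hsq y hy hyu]
  rw [angle, inner_sub_inner_smul_of_norm_eq_one hu, hnorm, ← sq, hsq y hy hyu, hxy, hxu, hyu]
  congr 1
  calc (c - c * c) / (1 - c ^ 2) = (1 - c) * c / ((1 - c) * (1 + c)) := by ring_nf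
    _ = c / (1 + c) := mul_div_mul_left _ _ (sub_ne_zero.mpr hc.symm)

end Projection

noncomputable def tetrahedronVertex (i : Fin 4) : EuclideanSpace ℝ (Fin 3) :=
  (√3)⁻¹ • (WithLp.equiv 2 (Fin 3 → ℝ)).symm
    (![![1, 1, 1], ![1, -1, -1], ![-1, 1, -1], ![-1, -1, 1]] i)

theorem inner_tetrahedronVertex (i j : Fin 4) :
    ⟪tetrahedronVertex i, tetrahedronVertex j⟫ = if i = j then 1 else -(1 / 3) := by
  have h3 : (√3)⁻¹ * (√3)⁻¹ = (3 : ℝ)⁻¹ := by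
    rw [← mul_inv, mul_self_sqrt (by norm_num)]
  simp only [tetrahedronVertex, PiLp.inner_apply, Fin.sum_univ_three]
  fin_cases i <;> fin_cases j <;> simp [h3] <;> norm_num

theorem norm_tetrahedronVertex (i : Fin 4) : ‖tetrahedronVertex i‖ = 1 := by
  rw [norm_eq_sqrt_real_inner, inner_tetrahedronVertex, if_pos rfl, sqrt_one]

theorem inner_tetrahedronVertex_of_ne {i j : Fin 4} (h : i ≠ j) :
    ⟪tetrahedronVertex i, tetrahedronVertex j⟫ = -(1 / 3) := by
  rw [inner_tetrahedronVertex, if_neg h]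

/-- In the cone over the 1-skeleton of the regular tetrahedron inscribed in
the unit sphere (vertices (±1,±1,±1)/√3 with an even number of minus signs' pattern),
the six planar triangular sheets meet in threes at equal angles of 2π/3 along each of the
four rays to the vertices: for each vertex `v k`, the tangent directions of the three
sheets through the ray to `v k` — the projections of the other three vertices onto the
plane orthogonal to `v k` — make pairwise angles 2π/3. -/
theorem tetrahedral_cone_sheets_meet_at_two_pi_div_three :
    let a : Fin 4 → (Fin 3 → ℝ) := ![![1, 1, 1], ![1, -1, -1], ![-1, 1, -1], ![-1, -1, 1]]
    let v : Fin 4 → EuclideanSpace ℝ (Fin 3) :=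
      fun i => (Real.sqrt 3)⁻¹ • (WithLp.equiv 2 (Fin 3 → ℝ)).symm (a i)
    -- projection of v i to the plane orthogonal to the ray through v k
    let w : Fin 4 → Fin 4 → EuclideanSpace ℝ (Fin 3) :=
      fun k i => v i - (inner ℝ (v i) (v k) : ℝ) • v k
    ∀ k i j : Fin 4, i ≠ k → j ≠ k → i ≠ j →
      InnerProductGeometry.angle (w k i) (w k j) = 2 * π / 3 := by
  intro a v w k i j hik hjk hij
  calc angle (w k i) (w k j) = arccos (-(1 / 3) / (1 + -(1 / 3))) :=
        angle_sub_inner_smul_of_equiangular (norm_tetrahedronVertex k) (norm_tetrahedronVertex i)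
          (norm_tetrahedronVertex j) (inner_tetrahedronVertex_of_ne hij)
          (inner_tetrahedronVertex_of_ne hik) (inner_tetrahedronVertex_of_ne hjk) (by norm_num)
    _ = 2 * π / 3 := by norm_num [arccos_neg_one_half]
end

section
/- For points p, q on the unit circle in ℝ² with angle φ between them where 0 < φ < 2π/3, the minimal Steiner tree connecting {0, p, q} has length 2 cos(φ/2 − π/6) < 2, whereas the union of segments [0,p] ∪ [0,q] has length 2. -/
/-!
Torricelli's argument. If `ω² - ω + 1 = 0` (so `ω = e^{∓iπ/3}`, `‖ω‖ = 1`), then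
`q - ω p = (q - j) - ω (p - j) - ω² j`, so the triangle inequality bounds
`‖j‖ + ‖p - j‖ + ‖q - j‖` below by `‖q - ω p‖` for every `j`. Rotating so that
`p = e^{-iφ/2}` and `q = e^{iφ/2}`, this bound is the chord `2 sin (φ/2 + π/6)`, and it is
attained at the Fermat point `cos (φ/2) - sin (φ/2) / √3` on the bisector, which lies on the
segment `[0, 1]` precisely because `φ ≤ 2π/3`.
-/

open Real
open Complex (I)

noncomputable def steinerSum (p q j : ℂ) : ℝ := ‖j‖ + ‖p - j‖ + ‖q - j‖

lemma steinerSum_comm (p q j : ℂ) : steinerSum p q j = steinerSum q p j := by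
  unfold steinerSum; ring

lemma steinerSum_mul_left {u : ℂ} (hu : ‖u‖ = 1) (p q j : ℂ) :
    steinerSum (u * p) (u * q) (u * j) = steinerSum p q j := by
  simp only [steinerSum, ← mul_sub, norm_mul, hu, one_mul]

lemma range_steinerSum_mul_left {u : ℂ} (hu : ‖u‖ = 1) (p q : ℂ) :
    Set.range (steinerSum (u * p) (u * q)) = Set.range (steinerSum p q) := by
  have hu0 : u ≠ 0 := norm_ne_zero_iff.mp (by rw [hu]; exact one_ne_zero)
  ext L
  constructor
  · rintro ⟨j, rfl⟩
    exact ⟨u⁻¹ * j, by rw [← steinerSum_mul_left hu, mul_inv_cancel_left₀ hu0]⟩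
  · rintro ⟨j, rfl⟩
    exact ⟨u * j, steinerSum_mul_left hu p q j⟩

lemma exp_neg_pi_div_three_mul_I_sq_sub_add_one :
    Complex.exp (↑(-(π / 3)) * I) ^ 2 - Complex.exp (↑(-(π / 3)) * I) + 1 = 0 := by
  have h3 : (√3 : ℂ) ^ 2 = 3 := by exact_mod_cast sq_sqrt (by norm_num : (0 : ℝ) ≤ 3)
  rw [Complex.exp_mul_I, ← Complex.ofReal_cos, ← Complex.ofReal_sin, cos_neg, sin_neg,
    cos_pi_div_three, sin_pi_div_three]
  push_cast
  linear_combination (-1/4 : ℂ) * h3 + (1/4 : ℂ) * (√3 : ℂ) ^ 2 * Complex.I_sq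

lemma norm_sub_mul_le_steinerSum {ω : ℂ} (hω : ω ^ 2 - ω + 1 = 0) (p q j : ℂ) :
    ‖q - ω * p‖ ≤ steinerSum p q j := by
  have hω3 : ω ^ 3 = -1 := by linear_combination (ω + 1) * hω
  have hnorm : ‖ω‖ = 1 :=
    (pow_eq_one_iff_of_nonneg (norm_nonneg ω) three_ne_zero).mp (by
      rw [← norm_pow, hω3, norm_neg, norm_one])
  calc ‖q - ω * p‖ = ‖(q - j) + (-ω) * (p - j) + (-ω ^ 2) * j‖ := by
        congr 1; linear_combination j * hω
    _ ≤ ‖q - j‖ + ‖(-ω) * (p - j)‖ + ‖(-ω ^ 2) * j‖ := norm_add₃_le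
    _ = steinerSum p q j := by
        simp only [steinerSum, norm_mul, norm_neg, norm_pow, hnorm]; ring

lemma norm_exp_sub_exp_neg_pi_div_three_mul (ψ : ℝ) :
    ‖Complex.exp (↑(ψ / 2) * I)
        - Complex.exp (↑(-(π / 3)) * I) * Complex.exp (↑(-(ψ / 2)) * I)‖
      = 2 * |sin (ψ / 2 + π / 6)| := by
  have h : Complex.exp (↑(ψ / 2) * I)
        - Complex.exp (↑(-(π / 3)) * I) * Complex.exp (↑(-(ψ / 2)) * I)
      = Complex.exp (↑(-(ψ / 2 + π / 3)) * I) * (Complex.exp (I * ↑(ψ + π / 3)) - 1) := by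
    rw [mul_sub, ← Complex.exp_add, ← Complex.exp_add, mul_one]
    push_cast; ring_nf
  rw [h, norm_mul, Complex.norm_exp_ofReal_mul_I, one_mul,
    Complex.norm_exp_I_mul_ofReal_sub_one, norm_mul, Real.norm_two, Real.norm_eq_abs]
  ring_nf

lemma norm_exp_mul_I_sub_ofReal (θ r : ℝ) :
    ‖Complex.exp (↑θ * I) - r‖ = √((cos θ - r) ^ 2 + sin θ ^ 2) := by
  rw [← Complex.norm_add_mul_I]
  congr 1
  apply Complex.ext <;> simp [Complex.cos_ofReal_re, Complex.sin_ofReal_re]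

lemma steinerSum_fermatPoint {ψ : ℝ} (h0 : 0 ≤ ψ) (h1 : ψ ≤ 2 * π / 3) :
    steinerSum (Complex.exp (↑(-(ψ / 2)) * I)) (Complex.exp (↑(ψ / 2) * I))
        ↑(cos (ψ / 2) - sin (ψ / 2) / √3) = 2 * sin (ψ / 2 + π / 6) := by
  have hπ := pi_pos
  have hs : 0 ≤ sin (ψ / 2) := sin_nonneg_of_nonneg_of_le_pi (by linarith) (by linarith)
  have h3 : √3 ^ 2 = 3 := sq_sqrt (by norm_num)
  have h30 : 0 < √3 := by positivity
  have hr : 0 ≤ cos (ψ / 2) - sin (ψ / 2) / √3 := by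
    have hcos : 0 ≤ cos (ψ / 2 + π / 6) :=
      cos_nonneg_of_neg_pi_div_two_le_of_le (by linarith) (by linarith)
    rw [cos_add, cos_pi_div_six, sin_pi_div_six] at hcos
    rw [sub_nonneg, div_le_iff₀ h30]
    linarith
  have hleg : ∀ θ, cos θ = cos (ψ / 2) → sin θ ^ 2 = sin (ψ / 2) ^ 2 →
      ‖Complex.exp (↑θ * I) - ↑(cos (ψ / 2) - sin (ψ / 2) / √3)‖
        = 2 * sin (ψ / 2) / √3 := by
    intro θ hcos hsin
    rw [norm_exp_mul_I_sub_ofReal, hcos, hsin,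
      ← sqrt_sq (by positivity : 0 ≤ 2 * sin (ψ / 2) / √3)]
    congr 1
    field_simp
    linear_combination sin (ψ / 2) ^ 2 * h3
  rw [steinerSum, Complex.norm_real, norm_of_nonneg hr,
    hleg _ (cos_neg _) (by rw [sin_neg, neg_sq]), hleg _ rfl rfl,
    sin_add, cos_pi_div_six, sin_pi_div_six]
  field_simp
  linear_combination (-sin (ψ / 2)) * h3

lemma exists_norm_eq_one_mul_exp_of_norm_eq_one {p q : ℂ} (hp : ‖p‖ = 1) (hq : ‖q‖ = 1) :
    ∃ u ψ, ‖u‖ = 1 ∧ |ψ| = InnerProductGeometry.angle p q ∧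
      p = u * Complex.exp (↑(-(ψ / 2)) * I) ∧ q = u * Complex.exp (↑(ψ / 2) * I) := by
  have hp0 : p ≠ 0 := norm_ne_zero_iff.mp (by rw [hp]; exact one_ne_zero)
  have hq0 : q ≠ 0 := norm_ne_zero_iff.mp (by rw [hq]; exact one_ne_zero)
  set ψ := (q / p).arg
  refine ⟨p * Complex.exp (↑(ψ / 2) * I), ψ, ?_, ?_, ?_, ?_⟩
  · rw [norm_mul, hp, Complex.norm_exp_ofReal_mul_I, one_mul]
  · rw [InnerProductGeometry.angle_comm, Complex.angle_eq_abs_arg hq0 hp0]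
  · rw [mul_assoc, ← Complex.exp_add, ← add_mul, ← Complex.ofReal_add, add_neg_cancel,
      Complex.ofReal_zero, zero_mul, Complex.exp_zero, mul_one]
  · have hqp : Complex.exp (↑ψ * I) = q / p := by
      simpa [norm_div, hp, hq] using Complex.norm_mul_exp_arg_mul_I (q / p)
    rw [mul_assoc, ← Complex.exp_add, ← add_mul, ← Complex.ofReal_add, add_halves, hqp,
      mul_div_cancel₀ _ hp0]

lemma isLeast_range_steinerSum_exp {ψ : ℝ} (h : |ψ| ≤ 2 * π / 3) :
    IsLeast (Set.range (steinerSum (Complex.exp (↑(-(ψ / 2)) * I))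
      (Complex.exp (↑(ψ / 2) * I)))) (2 * sin (|ψ| / 2 + π / 6)) := by
  wlog hψ : 0 ≤ ψ generalizing ψ
  · have hneg := this (by rwa [abs_neg]) (by linarith)
    rw [abs_neg] at hneg
    simp only [neg_div, neg_neg] at hneg
    rwa [show steinerSum _ _ = steinerSum _ _ from funext (steinerSum_comm _ _)]
  rw [abs_of_nonneg hψ] at h ⊢
  have hπ := pi_pos
  refine ⟨⟨_, steinerSum_fermatPoint hψ h⟩, ?_⟩
  rintro _ ⟨j, rfl⟩
  have hsin : 0 ≤ sin (ψ / 2 + π / 6) :=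
    sin_nonneg_of_nonneg_of_le_pi (by linarith) (by linarith)
  calc 2 * sin (ψ / 2 + π / 6) = 2 * |sin (ψ / 2 + π / 6)| := by rw [abs_of_nonneg hsin]
    _ = _ := (norm_exp_sub_exp_neg_pi_div_three_mul ψ).symm
    _ ≤ _ := norm_sub_mul_le_steinerSum exp_neg_pi_div_three_mul_I_sq_sub_add_one _ _ j

theorem steiner_tree_beats_two_rays_general (φ : ℝ) (hφ : φ < 2 * π / 3)
    (p q : ℂ) (hp : ‖p‖ = 1) (hq : ‖q‖ = 1)
    (hangle : InnerProductGeometry.angle p q = φ) :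
    IsLeast {L : ℝ | ∃ j : ℂ, L = ‖j‖ + ‖p - j‖ + ‖q - j‖}
      (2 * Real.sin (φ / 2 + π / 6)) ∧
    2 * Real.sin (φ / 2 + π / 6) < 2 ∧
    ‖p‖ + ‖q‖ = 2 := by
  refine ⟨?_, ?_, by rw [hp, hq]; norm_num⟩
  · have hset : {L : ℝ | ∃ j : ℂ, L = ‖j‖ + ‖p - j‖ + ‖q - j‖} =
        Set.range (steinerSum p q) :=
      Set.ext fun L => exists_congr fun j => eq_comm
    obtain ⟨u, ψ, hu, hψ, rfl, rfl⟩ := exists_norm_eq_one_mul_exp_of_norm_eq_one hp hq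
    rw [hangle] at hψ
    subst hψ
    rw [hset, range_steinerSum_mul_left hu]
    exact isLeast_range_steinerSum_exp hφ.le
  · have hφ0 : 0 ≤ φ := hangle ▸ InnerProductGeometry.angle_nonneg p q
    have hπ := pi_pos
    have hlt : sin (φ / 2 + π / 6) < sin (π / 2) :=
      sin_lt_sin_of_lt_of_le_pi_div_two (by linarith) le_rfl (by linarith)
    rw [sin_pi_div_two] at hlt
    linarith

/-- For points p, q on the unit circle in ℝ² ≅ ℂ making an angle φ with
0 < φ < 2π/3, the minimal Steiner tree connecting {0, p, q} (one Fermat junction j, where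
the three edges meet at angles 2π/3) has length 2 sin(φ/2 + π/6) (a correct closed form
for 2 cos(π/3 − φ/2)), which is strictly less than 2, whereas the union of the segments
[0,p] ∪ [0,q] has length ‖p‖ + ‖q‖ = 2. -/
theorem steiner_tree_beats_two_rays (φ : ℝ) (hφ0 : 0 < φ) (hφ : φ < 2 * π / 3)
    (p q : ℂ) (hp : ‖p‖ = 1) (hq : ‖q‖ = 1)
    (hangle : InnerProductGeometry.angle p q = φ) :
    IsLeast {L : ℝ | ∃ j : ℂ, L = ‖j‖ + ‖p - j‖ + ‖q - j‖}
      (2 * Real.sin (φ / 2 + π / 6)) ∧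
    2 * Real.sin (φ / 2 + π / 6) < 2 ∧
    ‖p‖ + ‖q‖ = 2 :=
  steiner_tree_beats_two_rays_general φ hφ p q hp hq hangle
end
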